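/- If ⟨g, Qⁿg⟩ ~ 1/n as n → ∞ and σ_n² = n‖g‖² + 2∑_{k=1}^{n-1}(n-k)⟨g,Q^k g⟩ with ‖g‖ = 1, then σ_n² ~ 2n·log(n); in particular σ_n² = nℓ(n) with ℓ(n) ~ 2 log n slowly varying. -/

import Mathlib

/-!
Since `k a_k → 1`, the sequence `a_k` is asymptotic to `1/(k+1)`, so its partial sums are
asymptotic to the harmonic numbers and hence to `log n`, while the Cesàro means
`n⁻¹ ∑_{k<n} k a_k` converge to `1`. Expanding `(n - k) a_k` gives
`σ_n²/n = 2 ∑_{k<n} a_k + O(1) ∼ 2 log n`, and `ℓ(n) = σ_n²/n` is slowly varying because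
`log ⌊t n⌋ ∼ log n`.
-/

open Filter Finset Topology Asymptotics

theorem Asymptotics.IsEquivalent.sum_range {u v : ℕ → ℝ} (huv : u ~[atTop] v) (hv : 0 ≤ v)
    (hsum : Tendsto (fun n => ∑ k ∈ range n, v k) atTop atTop) :
    (fun n => ∑ k ∈ range n, u k) ~[atTop] fun n => ∑ k ∈ range n, v k := by
  have := huv.isLittleO.sum_range hv hsum
  simp only [Pi.sub_apply, sum_sub_distrib] at this
  exact this

theorem isEquivalent_harmonic_log :
    (fun n => ∑ k ∈ range n, ((k : ℝ) + 1)⁻¹) ~[atTop] fun n => Real.log n := by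
  have hbdd : (fun n => ∑ k ∈ range n, ((k : ℝ) + 1)⁻¹ - Real.log n) =O[atTop]
      fun _ => (1 : ℝ) := by
    refine Real.tendsto_harmonic_sub_log.isBigO_one ℝ |>.congr_left fun n => ?_
    simp [harmonic]
  exact hbdd.trans_isLittleO Real.isLittleO_const_log_atTop.natCast_atTop

theorem isEquivalent_inv_add_one_of_tendsto_mul {a : ℕ → ℝ}
    (ha : Tendsto (fun k : ℕ => (k : ℝ) * a k) atTop (𝓝 1)) :
    a ~[atTop] fun k => ((k : ℝ) + 1)⁻¹ := by
  have hinv : (fun k : ℕ => (k : ℝ)⁻¹) ~[atTop] fun k => ((k : ℝ) + 1)⁻¹ :=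
    (IsEquivalent.refl.add_const_of_norm_tendsto_atTop
      (tendsto_norm_atTop_atTop.comp tendsto_natCast_atTop_atTop)).symm.inv
  refine IsEquivalent.trans (isEquivalent_of_tendsto_one ?_) hinv
  refine ha.congr fun k => ?_
  simp [div_inv_eq_mul, mul_comm]

theorem isEquivalent_sum_range_log {a : ℕ → ℝ}
    (ha : Tendsto (fun k : ℕ => (k : ℝ) * a k) atTop (𝓝 1)) :
    (fun n => ∑ k ∈ range n, a k) ~[atTop] fun n => Real.log n :=
  ((isEquivalent_inv_add_one_of_tendsto_mul ha).sum_range (fun k => by positivity)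
    (isEquivalent_harmonic_log.symm.tendsto_atTop
      (Real.tendsto_log_atTop.comp tendsto_natCast_atTop_atTop))).trans isEquivalent_harmonic_log

theorem isEquivalent_log_natFloor_mul {t : ℝ} (ht : 0 < t) :
    (fun n : ℕ => Real.log ⌊t * n⌋₊) ~[atTop] fun n => Real.log n := by
  have htn : Tendsto (fun n : ℕ => t * n) atTop atTop :=
    tendsto_natCast_atTop_atTop.const_mul_atTop ht
  have hfloor : (fun n : ℕ => (⌊t * n⌋₊ : ℝ)) ~[atTop] fun n => t * n :=
    isEquivalent_of_tendsto_one (tendsto_nat_floor_div_atTop.comp htn)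
  have hlog : (fun n : ℕ => Real.log (t * n)) ~[atTop] fun n => Real.log n := by
    refine (IsEquivalent.refl.const_add_of_norm_tendsto_atTop (c := Real.log t)
      (tendsto_norm_atTop_atTop.comp
        (Real.tendsto_log_atTop.comp tendsto_natCast_atTop_atTop))).congr_left ?_
    filter_upwards [eventually_ne_atTop 0] with n hn
    simp [Real.log_mul ht.ne' (Nat.cast_ne_zero.2 hn)]
  exact (hfloor.log htn).trans hlog

theorem tendsto_div_comp_natFloor_mul_of_isEquivalent_log {ℓ : ℕ → ℝ} {c : ℝ} (hc : 0 < c)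
    (hℓ : ℓ ~[atTop] fun n => c * Real.log n) {t : ℝ} (ht : 0 < t) :
    Tendsto (fun n : ℕ => ℓ ⌊t * n⌋₊ / ℓ n) atTop (𝓝 1) := by
  have hfloor : Tendsto (fun n : ℕ => ⌊t * n⌋₊) atTop atTop :=
    tendsto_nat_floor_atTop.comp (tendsto_natCast_atTop_atTop.const_mul_atTop ht)
  have hcomp : (fun n : ℕ => ℓ ⌊t * n⌋₊) ~[atTop] ℓ :=
    (hℓ.comp_tendsto hfloor).trans <|
      (IsEquivalent.refl.mul (isEquivalent_log_natFloor_mul ht)).trans hℓ.symm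
  have hpos : ∀ᶠ n in atTop, 0 < ℓ n := hℓ.eventually_pos <| by
    filter_upwards [eventually_gt_atTop 1] with n hn
    exact mul_pos hc (Real.log_pos (Nat.one_lt_cast.2 hn))
  exact (isEquivalent_iff_tendsto_one (hpos.mono fun n hn => hn.ne')).mp hcomp

/-- The variance `σ_n²` of a sum of `n` terms of a stationary sequence with unit variance and
autocovariances `a k`. -/
def sigmaSq (a : ℕ → ℝ) (n : ℕ) : ℝ :=
  n + 2 * ∑ k ∈ Ico 1 n, ((n : ℝ) - k) * a k

theorem sigmaSq_div_eq (a : ℕ → ℝ) {n : ℕ} (hn : n ≠ 0) :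
    sigmaSq a n / n
      = 2 * ∑ k ∈ range n, a k + (1 - 2 * a 0 - 2 * ((n : ℝ)⁻¹ * ∑ k ∈ range n, k * a k)) := by
  have hsplit (f : ℕ → ℝ) : ∑ k ∈ range n, f k = f 0 + ∑ k ∈ Ico 1 n, f k := by
    rw [range_eq_Ico, sum_eq_sum_Ico_succ_bot (Nat.pos_of_ne_zero hn)]
  simp only [sigmaSq, hsplit, Nat.cast_zero, zero_mul, zero_add, sub_mul, sum_sub_distrib,
    ← mul_sum]
  field_simp
  ring

theorem isEquivalent_sigmaSq_div_log {a : ℕ → ℝ}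
    (ha : Tendsto (fun k : ℕ => (k : ℝ) * a k) atTop (𝓝 1)) :
    (fun n : ℕ => sigmaSq a n / n) ~[atTop] fun n => 2 * Real.log n := by
  have hsum : (fun n => 2 * ∑ k ∈ range n, a k) ~[atTop] fun n : ℕ => 2 * Real.log n :=
    IsEquivalent.refl.mul (isEquivalent_sum_range_log ha)
  have hbounded : (fun n : ℕ => 1 - 2 * a 0 - 2 * ((n : ℝ)⁻¹ * ∑ k ∈ range n, k * a k))
      =o[atTop] fun n : ℕ => 2 * Real.log n :=
    ((tendsto_const_nhds.sub (ha.cesaro.const_mul 2)).isBigO_one ℝ).trans_isLittleO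
      (Real.isLittleO_const_log_atTop.natCast_atTop.const_mul_right (c := (2 : ℝ)) two_ne_zero)
  refine (hsum.add_isLittleO hbounded).congr_left ?_
  filter_upwards [eventually_ne_atTop 0] with n hn
  exact (sigmaSq_div_eq a hn).symm

theorem variance_two_n_log_n_general
    (a : ℕ → ℝ)
    (halim : Tendsto (fun k : ℕ => (k : ℝ) * a k) atTop (𝓝 1))
    (σsq : ℕ → ℝ)
    (hσ : ∀ n : ℕ, σsq n = n + 2 * ∑ k ∈ Finset.Ico 1 n, ((n : ℝ) - k) * a k) :
    Tendsto (fun n : ℕ => σsq n / (2 * n * Real.log n)) atTop (𝓝 1) ∧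
    (∀ t : ℝ, 0 < t →
      Tendsto (fun n : ℕ => (σsq ⌊t * n⌋₊ / (⌊t * n⌋₊ : ℝ)) / (σsq n / n))
        atTop (𝓝 1)) := by
  obtain rfl : σsq = sigmaSq a := funext hσ
  have hℓ := isEquivalent_sigmaSq_div_log halim
  refine ⟨?_, fun t ht => tendsto_div_comp_natFloor_mul_of_isEquivalent_log two_pos hℓ ht⟩
  have hlog : ∀ᶠ n : ℕ in atTop, 2 * Real.log n ≠ 0 := by
    filter_upwards [eventually_gt_atTop 1] with n hn
    exact mul_ne_zero two_ne_zero (Real.log_pos (Nat.one_lt_cast.2 hn)).ne'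
  refine ((isEquivalent_iff_tendsto_one hlog).mp hℓ).congr fun n => ?_
  rw [Pi.div_apply, div_div, mul_left_comm, mul_assoc]

/-- if `a_k = ⟨g, Q^k g⟩ ≥ 0` satisfies `a_k ∼ 1/k` and
`σ_n² = n + 2 ∑_{k=1}^{n-1} (n-k) a_k` (for a unit vector `g`), then
`σ_n² ∼ 2 n log n`; in particular `σ_n² = n ℓ(n)` with `ℓ(n) = σ_n²/n ∼ 2 log n`
slowly varying. -/
theorem variance_two_n_log_n
    (a : ℕ → ℝ) (ha : ∀ k, 0 ≤ a k)
    (halim : Tendsto (fun k : ℕ => (k : ℝ) * a k) atTop (𝓝 1))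
    (σsq : ℕ → ℝ)
    (hσ : ∀ n : ℕ, σsq n = n + 2 * ∑ k ∈ Finset.Ico 1 n, ((n : ℝ) - k) * a k) :
    Tendsto (fun n : ℕ => σsq n / (2 * n * Real.log n)) atTop (𝓝 1) ∧
    (∀ t : ℝ, 0 < t →
      Tendsto (fun n : ℕ => (σsq ⌊t * n⌋₊ / (⌊t * n⌋₊ : ℝ)) / (σsq n / n))
        atTop (𝓝 1)) :=
  variance_two_n_log_n_general a halim σsq hσ
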